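/- Let V ⊆ ℝ^m be open and let φ : V → ℝ be C¹ with modulus of continuity of the gradient satisfying |∇φ(t₁) − ∇φ(t₂)| ≤ c ω(|t₁−t₂|) on a closed cube I ⊆ V with edges parallel to the axes. Let λ > 0, let δ_λ > 0 satisfy 2cλ · (m^{1/2}·2δ_λ)·ω(m^{1/2}·2δ_λ) = 1, and suppose 2δ_λ is less than the edge length of I. Let F : ℝ^m → ℂ be any function coinciding with e^{iλφ} on V. Then for every u ∈ λ·∇φ(I) there is a cube J ⊆ I with edges of length 2δ_λ parallel to the axes such that |(Δ_J F)^∧(u)| ≥ c_m δ_λ^m, where Δ_J is the product of triangle functions supported on J and c_m > 0 depends only on m. -/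

import Mathlib

/-! Fix `t₀ ∈ I` with `u = λ ∇φ(t₀)` and a cube `J ∋ t₀` of edge `2δ` inside `I`. The phase
`ψ(t) = λφ(t) - ⟨u, t⟩` has gradient `λ(∇φ(t) - ∇φ(t₀))`, of norm at most `cλω(√m·2δ)` on `J`,
and `J` has diameter at most `√m·2δ`; by the choice of `δ`, `ψ` therefore stays within `1/2` of
`ψ(t₀)` on `J`. After multiplying by `e^{-iψ(t₀)}`, the real part of `Δ_J e^{iψ}` is at least
`cos(1/2) Δ_J`, and `∫ Δ_J ≥ 2^{-m} δ^m` because `Δ_J ≥ 2^{-m}` on the concentric cube of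
edge `δ`. -/

open MeasureTheory Real

noncomputable section

/-- The Fourier transform on `ℝ^m` (Euclidean space) with normalization
`f̂(u) = (2π)^{-m} ∫ f(t) e^{-i(u,t)} dt`. -/
def ftE (m : ℕ) (f : EuclideanSpace ℝ (Fin m) → ℂ) (u : EuclideanSpace ℝ (Fin m)) : ℂ :=
  ((((2 * π) ^ m : ℝ) : ℂ))⁻¹ *
    ∫ t : EuclideanSpace ℝ (Fin m),
      f t * Complex.exp (-Complex.I * ((inner ℝ u t : ℝ) : ℂ))

/-- The product of triangle functions supported on the cube with lower corner `b`
and edge length `2δ`: `Δ_J(t) = Π_j max(1 − |t_j − (b_j + δ)|/δ, 0)`. -/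
def triCube (m : ℕ) (b : EuclideanSpace ℝ (Fin m)) (δ : ℝ)
    (t : EuclideanSpace ℝ (Fin m)) : ℝ :=
  ∏ j, max (1 - |t j - (b j + δ)| / δ) 0

theorem EuclideanSpace.norm_le_sqrt_card_mul {ι : Type*} [Fintype ι] {x : EuclideanSpace ℝ ι}
    {r : ℝ} (hr : 0 ≤ r) (hx : ∀ i, |x i| ≤ r) : ‖x‖ ≤ √(Fintype.card ι) * r := by
  have hsq : ∀ i, ‖x i‖ ^ 2 ≤ r ^ 2 := fun i => pow_le_pow_left₀ (norm_nonneg _) (hx i) 2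
  calc ‖x‖ = √(∑ i, ‖x i‖ ^ 2) := EuclideanSpace.norm_eq x
    _ ≤ √(Fintype.card ι * r ^ 2) := by
        gcongr
        simpa using Finset.sum_le_card_nsmul Finset.univ _ _ fun i _ => hsq i
    _ = √(Fintype.card ι) * r := by rw [sqrt_mul (Nat.cast_nonneg _), sqrt_sq hr]

theorem abs_sub_sub_inner_le_of_hasGradientAt {E : Type*} [NormedAddCommGroup E]
    [InnerProductSpace ℝ E] [CompleteSpace E] {K : Set E} (hK : Convex ℝ K) {f : E → ℝ}
    {g : E → E} {C : ℝ} {x y : E} (hf : ∀ z ∈ K, HasGradientAt f (g z) z)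
    (hg : ∀ z ∈ K, ‖g z - g x‖ ≤ C) (hx : x ∈ K) (hy : y ∈ K) :
    |f y - f x - inner ℝ (g x) (y - x)| ≤ C * ‖y - x‖ := by
  let toDual := InnerProductSpace.toDual ℝ E
  have hderiv : ∀ z ∈ K, HasFDerivWithinAt (fun w => f w - inner ℝ (g x) w)
      (toDual (g z - g x)) K z := fun z hz => by
    have hsplit : toDual (g z - g x) = toDual (g z) - innerSL ℝ (g x) := by
      ext w
      simp [toDual]
    rw [hsplit]
    exact ((hf z hz).hasFDerivAt.sub ((innerSL ℝ (g x)).hasFDerivAt)).hasFDerivWithinAt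
  have := hK.norm_image_sub_le_of_norm_hasFDerivWithin_le hderiv
    (fun z hz => (toDual.norm_map _).trans_le (hg z hz)) hx hy
  calc |f y - f x - inner ℝ (g x) (y - x)|
      = ‖f y - inner ℝ (g x) y - (f x - inner ℝ (g x) x)‖ := by
        rw [Real.norm_eq_abs, inner_sub_right]
        ring_nf
    _ ≤ C * ‖y - x‖ := this

def phase {E : Type*} [NormedAddCommGroup E] [InnerProductSpace ℝ E] (lam : ℝ) (φ : E → ℝ)
    (u t : E) : ℝ :=
  lam * φ t - inner ℝ u t

theorem abs_phase_sub_le {E : Type*} [NormedAddCommGroup E] [InnerProductSpace ℝ E]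
    [CompleteSpace E] {K : Set E} (hK : Convex ℝ K) {φ : E → ℝ} {g : E → E} {ω : ℝ → ℝ}
    {c lam s : ℝ} {t₀ t : E} (hφ : ∀ z ∈ K, HasGradientAt φ (g z) z)
    (hmod : ∀ z ∈ K, ‖g z - g t₀‖ ≤ c * ω ‖z - t₀‖) (hω : Monotone ω) (hc : 0 ≤ c)
    (hlam : 0 ≤ lam) (hs : ∀ z ∈ K, ‖z - t₀‖ ≤ s) (ht₀ : t₀ ∈ K) (ht : t ∈ K) :
    |phase lam φ (lam • g t₀) t - phase lam φ (lam • g t₀) t₀| ≤ lam * (c * ω s) * s := by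
  have hg : ∀ z ∈ K, ‖g z - g t₀‖ ≤ c * ω s := fun z hz =>
    (hmod z hz).trans (by gcongr; exact hω (hs z hz))
  have hcω : 0 ≤ c * ω s := (norm_nonneg _).trans (hg t ht)
  calc |phase lam φ (lam • g t₀) t - phase lam φ (lam • g t₀) t₀|
      = lam * |φ t - φ t₀ - inner ℝ (g t₀) (t - t₀)| := by
        rw [phase, phase, ← abs_of_nonneg hlam, ← abs_mul, abs_of_nonneg hlam, inner_sub_right,
          real_inner_smul_left, real_inner_smul_left]
        ring_nf
    _ ≤ lam * (c * ω s * s) := by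
        gcongr
        exact (abs_sub_sub_inner_le_of_hasGradientAt hK hφ hg ht₀ ht).trans
          (by gcongr; exact hs t ht)
    _ = lam * (c * ω s) * s := by ring

theorem cos_one_half_pos : 0 < cos (1 / 2) :=
  cos_pos_of_mem_Ioo ⟨by linarith [pi_gt_three], by linarith [pi_gt_three]⟩

theorem cos_mul_integral_le_norm_integral_mul_exp {α : Type*} [MeasurableSpace α] {μ : Measure α}
    {f θ : α → ℝ} {θ₀ ε : ℝ} (hε : ε ≤ π) (hf₀ : ∀ t, 0 ≤ f t) (hf : Integrable f μ)
    (hθ : AEStronglyMeasurable θ μ) (hclose : ∀ᵐ t ∂μ, |θ t - θ₀| ≤ ε) :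
    cos ε * ∫ t, f t ∂μ ≤ ‖∫ t, (f t : ℂ) * Complex.exp (θ t * Complex.I) ∂μ‖ := by
  set Z := ∫ t, (f t : ℂ) * Complex.exp (θ t * Complex.I) ∂μ
  set w := Complex.exp ((-θ₀ : ℝ) * Complex.I)
  have hunit : ∀ x : ℝ, ‖Complex.exp (x * Complex.I)‖ = 1 := Complex.norm_exp_ofReal_mul_I
  have hint : Integrable (fun t => (f t : ℂ) * Complex.exp (θ t * Complex.I)) μ :=
    hf.ofReal.mul_bdd (by fun_prop) (Filter.Eventually.of_forall fun t => (hunit _).le)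
  have hrotate : ∀ t, (w * ((f t : ℂ) * Complex.exp (θ t * Complex.I))).re = f t * cos (θ t - θ₀) :=
    fun t => by
      rw [mul_left_comm, ← Complex.exp_add, ← add_mul, ← Complex.ofReal_add,
        Complex.re_ofReal_mul, Complex.exp_ofReal_mul_I_re, neg_add_eq_sub]
  have hre : ∫ t, f t * cos (θ t - θ₀) ∂μ = (w * Z).re := by
    simp_rw [← hrotate]
    exact integral_const_mul w _ ▸ integral_re (hint.const_mul w)
  calc cos ε * ∫ t, f t ∂μ = ∫ t, f t * cos ε ∂μ := by rw [← integral_const_mul]; simp_rw [mul_comm]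
    _ ≤ ∫ t, f t * cos (θ t - θ₀) ∂μ := by
        refine integral_mono_ae (hf.mul_const _) ?_ ?_
        · simpa only [RCLike.re_to_complex, hrotate] using (hint.const_mul w).re
        · filter_upwards [hclose] with t ht
          rw [← cos_abs (θ t - θ₀)]
          exact mul_le_mul_of_nonneg_left
            (cos_le_cos_of_nonneg_of_le_pi (abs_nonneg _) hε ht) (hf₀ t)
    _ = (w * Z).re := hre
    _ ≤ ‖w * Z‖ := Complex.re_le_norm _
    _ = ‖Z‖ := by rw [norm_mul, hunit, one_mul]

section Cube

variable {ι : Type*}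

def coordCube (b : ι → ℝ) (r : ℝ) : Set (EuclideanSpace ℝ ι) :=
  {t | ∀ i, t i ∈ Set.Icc (b i) (b i + r)}

theorem coordCube_eq_preimage (b : ι → ℝ) (r : ℝ) :
    coordCube b r = WithLp.ofLp ⁻¹' Set.univ.pi fun i => Set.Icc (b i) (b i + r) := by
  ext t
  simp only [coordCube, Set.mem_ofPred_eq, Set.mem_preimage, Set.mem_univ_pi]

theorem isCompact_coordCube (b : ι → ℝ) (r : ℝ) : IsCompact (coordCube b r) := by
  rw [coordCube_eq_preimage]
  exact ((PiLp.continuousLinearEquiv 2 ℝ fun _ : ι => ℝ).toHomeomorph.isCompact_preimage).2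
    (isCompact_univ_pi fun _ => isCompact_Icc)

theorem measurableSet_coordCube [Fintype ι] (b : ι → ℝ) (r : ℝ) : MeasurableSet (coordCube b r) :=
  (isCompact_coordCube b r).isClosed.measurableSet

theorem convex_coordCube (b : ι → ℝ) (r : ℝ) : Convex ℝ (coordCube b r) := by
  rw [coordCube_eq_preimage]
  exact (convex_pi fun _ _ => convex_Icc _ _).linear_preimage
    (WithLp.linearEquiv 2 ℝ (ι → ℝ)).toLinearMap

theorem volume_coordCube [Fintype ι] (b : ι → ℝ) (r : ℝ) :
    volume (coordCube b r) = ENNReal.ofReal r ^ Fintype.card ι := by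
  rw [coordCube_eq_preimage, ← MeasurableEquiv.coe_toLp_symm,
    (EuclideanSpace.volume_preserving_symm_measurableEquiv_toLp ι).measure_preimage
      (MeasurableSet.univ_pi fun _ => measurableSet_Icc).nullMeasurableSet, volume_pi_pi]
  simp [Real.volume_Icc]

theorem norm_sub_le_of_mem_coordCube [Fintype ι] {b : ι → ℝ} {r : ℝ} (hr : 0 ≤ r)
    {x y : EuclideanSpace ℝ ι} (hx : x ∈ coordCube b r) (hy : y ∈ coordCube b r) :
    ‖x - y‖ ≤ √(Fintype.card ι) * r :=
  EuclideanSpace.norm_le_sqrt_card_mul hr fun i => by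
    simp only [PiLp.sub_apply]
    rw [abs_le]
    constructor <;> linarith [(hx i).1, (hx i).2, (hy i).1, (hy i).2]

theorem exists_coordCube_subset_mem {a : ι → ℝ} {L r : ℝ} {t : EuclideanSpace ℝ ι}
    (ht : t ∈ coordCube a L) (hr₀ : 0 ≤ r) (hr : r ≤ L) :
    ∃ b : EuclideanSpace ℝ ι, (∀ i, a i ≤ b i ∧ b i + r ≤ a i + L) ∧ t ∈ coordCube b r := by
  refine ⟨WithLp.toLp 2 fun i => min (t i) (a i + L - r), fun i => ?_, fun i => ?_⟩ <;>
    have := ht i <;> simp only [Set.mem_Icc] at this ⊢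
  · exact ⟨le_min this.1 (by linarith), by linarith [min_le_right (t i) (a i + L - r)]⟩
  · refine ⟨min_le_left _ _, ?_⟩
    rcases min_choice (t i) (a i + L - r) with h | h <;> rw [h] <;> linarith

end Cube

section TriCube

variable {m : ℕ} {b : EuclideanSpace ℝ (Fin m)} {δ : ℝ}

theorem triCube_nonneg (t : EuclideanSpace ℝ (Fin m)) : 0 ≤ triCube m b δ t :=
  Finset.prod_nonneg fun _ _ => le_max_right _ _

theorem continuous_triCube : Continuous (triCube m b δ) :=
  continuous_finsetProd _ fun j _ => by fun_prop

theorem triCube_eq_zero_of_notMem (hδ : 0 < δ) {t : EuclideanSpace ℝ (Fin m)}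
    (ht : t ∉ coordCube b (2 * δ)) : triCube m b δ t = 0 := by
  obtain ⟨i, hi⟩ : ∃ i, t i ∉ Set.Icc (b i) (b i + 2 * δ) := by simpa [coordCube] using ht
  refine Finset.prod_eq_zero (Finset.mem_univ i) (max_eq_right ?_)
  rw [sub_nonpos, one_le_div hδ, le_abs]
  rw [Set.mem_Icc, not_and_or, not_le, not_le] at hi
  rcases hi with h | h
  · right; linarith
  · left; linarith

theorem inv_two_pow_le_triCube (hδ : 0 < δ) {t : EuclideanSpace ℝ (Fin m)}
    (ht : t ∈ coordCube (fun i => b i + δ / 2) δ) : (2⁻¹ : ℝ) ^ m ≤ triCube m b δ t := by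
  have hnear : ∀ j, (2⁻¹ : ℝ) ≤ max (1 - |t j - (b j + δ)| / δ) 0 := fun j => by
    have hj : |t j - (b j + δ)| ≤ δ / 2 := abs_le.2 ⟨by linarith [(ht j).1], by linarith [(ht j).2]⟩
    refine le_max_of_le_left ?_
    have : |t j - (b j + δ)| / δ ≤ 2⁻¹ := by rw [div_le_iff₀ hδ]; linarith
    linarith
  calc (2⁻¹ : ℝ) ^ m = ∏ _j : Fin m, (2⁻¹ : ℝ) := by simp
    _ ≤ triCube m b δ t := Finset.prod_le_prod (fun _ _ => by positivity) fun j _ => hnear j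

theorem integrable_triCube (hδ : 0 < δ) : Integrable (triCube m b δ) :=
  continuous_triCube.integrable_of_hasCompactSupport <|
    HasCompactSupport.intro (isCompact_coordCube _ _) fun _ ht => triCube_eq_zero_of_notMem hδ ht

theorem inv_two_pow_mul_pow_le_integral_triCube (hδ : 0 < δ) :
    (2⁻¹ : ℝ) ^ m * δ ^ m ≤ ∫ t, triCube m b δ t := by
  let S := coordCube (ι := Fin m) (fun i => b i + δ / 2) δ
  have hS : volume.real S = δ ^ m := by
    simp [S, measureReal_def, volume_coordCube, ENNReal.toReal_ofReal hδ.le]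
  calc (2⁻¹ : ℝ) ^ m * δ ^ m = volume.real S • (2⁻¹ : ℝ) ^ m := by rw [hS, smul_eq_mul, mul_comm]
    _ ≤ ∫ t in S, triCube m b δ t :=
        setIntegral_ge_of_const_le (measurableSet_coordCube _ _) (by simp [S, volume_coordCube])
          (fun _ ht => inv_two_pow_le_triCube hδ ht) (integrable_triCube hδ).integrableOn
    _ ≤ ∫ t, triCube m b δ t :=
        setIntegral_le_integral (integrable_triCube hδ) (Filter.Eventually.of_forall triCube_nonneg)

theorem ftE_triCube_mul_eq_setIntegral {lam : ℝ} {φ : EuclideanSpace ℝ (Fin m) → ℝ}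
    {F : EuclideanSpace ℝ (Fin m) → ℂ} (u : EuclideanSpace ℝ (Fin m)) (hδ : 0 < δ)
    (hF : ∀ t ∈ coordCube b (2 * δ), F t = Complex.exp (Complex.I * lam * φ t)) :
    ftE m (fun t => (triCube m b δ t : ℂ) * F t) u = (((2 * π) ^ m : ℝ) : ℂ)⁻¹ *
      ∫ t in coordCube b (2 * δ), (triCube m b δ t : ℂ) *
        Complex.exp (phase lam φ u t * Complex.I) := by
  rw [ftE, ← setIntegral_eq_integral_of_forall_compl_eq_zero (s := coordCube b (2 * δ))
    fun t ht => by simp [triCube_eq_zero_of_notMem hδ ht]]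
  congr 1
  refine setIntegral_congr_fun (measurableSet_coordCube _ _) fun t ht => ?_
  simp only [hF t ht, phase, mul_assoc, ← Complex.exp_add]
  push_cast
  ring_nf

theorem le_norm_ftE_triCube_mul_of_abs_phase_sub_le {lam : ℝ}
    {φ : EuclideanSpace ℝ (Fin m) → ℝ} {F : EuclideanSpace ℝ (Fin m) → ℂ}
    {u t₀ : EuclideanSpace ℝ (Fin m)} (hδ : 0 < δ)
    (hF : ∀ t ∈ coordCube b (2 * δ), F t = Complex.exp (Complex.I * lam * φ t))
    (hφ : ContinuousOn φ (coordCube b (2 * δ)))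
    (hphase : ∀ t ∈ coordCube b (2 * δ), |phase lam φ u t - phase lam φ u t₀| ≤ 1 / 2) :
    ((2 * π) ^ m)⁻¹ * (cos (1 / 2) * 2⁻¹ ^ m) * δ ^ m
      ≤ ‖ftE m (fun t => (triCube m b δ t : ℂ) * F t) u‖ := by
  have hK := measurableSet_coordCube (ι := Fin m) b (2 * δ)
  have hψ : ContinuousOn (phase lam φ u) (coordCube b (2 * δ)) :=
    (continuousOn_const.mul hφ).sub (continuous_const.inner continuous_id).continuousOn
  have hrot := cos_mul_integral_le_norm_integral_mul_exp
    (μ := volume.restrict (coordCube b (2 * δ))) (f := triCube m b δ)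
    (by linarith [pi_gt_three]) triCube_nonneg (integrable_triCube hδ).integrableOn
    (hψ.aestronglyMeasurable hK) (ae_restrict_of_forall_mem hK hphase)
  rw [setIntegral_eq_integral_of_forall_compl_eq_zero fun t ht => triCube_eq_zero_of_notMem hδ ht]
    at hrot
  rw [ftE_triCube_mul_eq_setIntegral u hδ hF, norm_mul, norm_inv, Complex.norm_real,
    norm_of_nonneg (by positivity)]
  calc ((2 * π) ^ m)⁻¹ * (cos (1 / 2) * 2⁻¹ ^ m) * δ ^ m
      = ((2 * π) ^ m)⁻¹ * (cos (1 / 2) * (2⁻¹ ^ m * δ ^ m)) := by ring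
    _ ≤ _ := by
        gcongr
        exact (mul_le_mul_of_nonneg_left
          (inv_two_pow_mul_pow_le_integral_triCube hδ) cos_one_half_pos.le).trans hrot

end TriCube

theorem stmt11_general (m : ℕ) :
    ∃ cm : ℝ, 0 < cm ∧
      ∀ (V : Set (EuclideanSpace ℝ (Fin m)))
        (φ : EuclideanSpace ℝ (Fin m) → ℝ)
        (gφ : EuclideanSpace ℝ (Fin m) → EuclideanSpace ℝ (Fin m))
        (ω : ℝ → ℝ) (c lam δ L : ℝ) (a : EuclideanSpace ℝ (Fin m))
        (F : EuclideanSpace ℝ (Fin m) → ℂ),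
        IsOpen V →
        (∀ t ∈ V, HasGradientAt φ (gφ t) t) →
        Monotone ω → Continuous ω → ω 0 = 0 →
        0 < c → 0 < lam → 0 < δ → 0 < L →
        {t : EuclideanSpace ℝ (Fin m) | ∀ i, t i ∈ Set.Icc (a i) (a i + L)} ⊆ V →
        (∀ t₁ ∈ {t : EuclideanSpace ℝ (Fin m) | ∀ i, t i ∈ Set.Icc (a i) (a i + L)},
         ∀ t₂ ∈ {t : EuclideanSpace ℝ (Fin m) | ∀ i, t i ∈ Set.Icc (a i) (a i + L)},
          ‖gφ t₁ - gφ t₂‖ ≤ c * ω ‖t₁ - t₂‖) →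
        2 * c * lam * (Real.sqrt m * (2 * δ)) * ω (Real.sqrt m * (2 * δ)) = 1 →
        2 * δ < L →
        (∀ t ∈ V, F t = Complex.exp (Complex.I * lam * φ t)) →
        ∀ u : EuclideanSpace ℝ (Fin m),
          (∃ t₀, (∀ i, t₀ i ∈ Set.Icc (a i) (a i + L)) ∧ u = lam • gφ t₀) →
          ∃ b : EuclideanSpace ℝ (Fin m),
            (∀ i, a i ≤ b i ∧ b i + 2 * δ ≤ a i + L) ∧
            cm * δ ^ m ≤ ‖ftE m (fun t => (triCube m b δ t : ℂ) * F t) u‖ := by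
  refine ⟨((2 * π) ^ m)⁻¹ * (cos (1 / 2) * 2⁻¹ ^ m),
    mul_pos (by positivity) (mul_pos cos_one_half_pos (by positivity)), ?_⟩
  rintro V φ gφ ω c lam δ L a F - hgrad hωmono - - hc hlam hδ - hIV hmod hscale hδL hF
    u ⟨t₀, ht₀, rfl⟩
  obtain ⟨b, hbI, ht₀K⟩ := exists_coordCube_subset_mem (a := ⇑a) ht₀ (by positivity) hδL.le
  have hKI : coordCube b (2 * δ) ⊆ coordCube a L := fun t ht i =>
    ⟨(hbI i).1.trans (ht i).1, (ht i).2.trans (hbI i).2⟩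
  have hKV : coordCube b (2 * δ) ⊆ V := fun t ht => hIV (hKI ht)
  have hdiam : ∀ t ∈ coordCube b (2 * δ), ‖t - t₀‖ ≤ √m * (2 * δ) := fun t ht => by
    simpa using norm_sub_le_of_mem_coordCube (by positivity) ht ht₀K
  refine ⟨b, hbI, le_norm_ftE_triCube_mul_of_abs_phase_sub_le (t₀ := t₀) hδ
    (fun t ht => hF t (hKV ht)) (fun t ht => (hgrad t (hKV ht)).continuousAt.continuousWithinAt)
    fun t ht => ?_⟩
  refine (abs_phase_sub_le (convex_coordCube _ _) (fun z hz => hgrad z (hKV hz))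
    (fun z hz => hmod z (hKI hz) t₀ (hKI ht₀K)) hωmono hc.le hlam.le hdiam ht₀K ht).trans ?_
  linarith

/-- Key lemma: let `V ⊆ ℝ^m` be open, `φ : V → ℝ` of class `C¹` whose gradient has
modulus of continuity `≤ c·ω` on a closed coordinate cube `I ⊆ V` of edge `L`; let
`λ > 0` and `δ_λ > 0` satisfy `2cλ·(√m·2δ_λ)·ω(√m·2δ_λ) = 1` and `2δ_λ < L`. If
`F : ℝ^m → ℂ` coincides with `e^{iλφ}` on `V`, then for every `u ∈ λ·∇φ(I)` there
is a coordinate cube `J ⊆ I` of edge `2δ_λ` with `|(Δ_J F)^∧(u)| ≥ c_m δ_λ^m`,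
where `c_m > 0` depends only on `m`. -/
theorem stmt11 (m : ℕ) (hm : 1 ≤ m) :
    ∃ cm : ℝ, 0 < cm ∧
      ∀ (V : Set (EuclideanSpace ℝ (Fin m)))
        (φ : EuclideanSpace ℝ (Fin m) → ℝ)
        (gφ : EuclideanSpace ℝ (Fin m) → EuclideanSpace ℝ (Fin m))
        (ω : ℝ → ℝ) (c lam δ L : ℝ) (a : EuclideanSpace ℝ (Fin m))
        (F : EuclideanSpace ℝ (Fin m) → ℂ),
        IsOpen V →
        (∀ t ∈ V, HasGradientAt φ (gφ t) t) →
        Monotone ω → Continuous ω → ω 0 = 0 →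
        0 < c → 0 < lam → 0 < δ → 0 < L →
        {t : EuclideanSpace ℝ (Fin m) | ∀ i, t i ∈ Set.Icc (a i) (a i + L)} ⊆ V →
        (∀ t₁ ∈ {t : EuclideanSpace ℝ (Fin m) | ∀ i, t i ∈ Set.Icc (a i) (a i + L)},
         ∀ t₂ ∈ {t : EuclideanSpace ℝ (Fin m) | ∀ i, t i ∈ Set.Icc (a i) (a i + L)},
          ‖gφ t₁ - gφ t₂‖ ≤ c * ω ‖t₁ - t₂‖) →
        2 * c * lam * (Real.sqrt m * (2 * δ)) * ω (Real.sqrt m * (2 * δ)) = 1 →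
        2 * δ < L →
        (∀ t ∈ V, F t = Complex.exp (Complex.I * lam * φ t)) →
        ∀ u : EuclideanSpace ℝ (Fin m),
          (∃ t₀, (∀ i, t₀ i ∈ Set.Icc (a i) (a i + L)) ∧ u = lam • gφ t₀) →
          ∃ b : EuclideanSpace ℝ (Fin m),
            (∀ i, a i ≤ b i ∧ b i + 2 * δ ≤ a i + L) ∧
            cm * δ ^ m ≤ ‖ftE m (fun t => (triCube m b δ t : ℂ) * F t) u‖ :=
  stmt11_general m
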